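/- arXiv:1408.4499 — 4 statements merged into one kernel-verified Lean document; each statement's English description precedes it below -/
import Mathlib

section
/- Let $p(\cdot) \in \mathcal{P}$ with $p_+ < \infty$ and let $w$ be a weight with $w \in L^{p(\cdot)}_{loc}$. Then the bounded functions of compact support are dense in the weighted variable Lebesgue space $L^{p(\cdot)}(w)$. -/
open MeasureTheory Metric ENNReal

noncomputable section

abbrev Rn (n : ℕ) := EuclideanSpace ℝ (Fin n)

variable {n : ℕ}

/-- The variable Lebesgue (quasi-)norm of an `ℝ≥0∞`-valued function `f` with
exponent function `p` (values in `(0,∞]`), following the definition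
`‖f‖ = inf { λ > 0 : ∫_{p≠∞} (f/λ)^{p(x)} dx + ‖f/λ‖_{L^∞({p=∞})} ≤ 1 }`. -/
def vnorm (p : Rn n → ℝ≥0∞) (f : Rn n → ℝ≥0∞) : ℝ≥0∞ :=
  sInf {l : ℝ≥0∞ | 0 < l ∧
    (∫⁻ x in {x | p x ≠ ∞}, (f x / l) ^ (p x).toReal) +
      essSup (fun x => f x / l) (volume.restrict {x | p x = ∞}) ≤ 1}

/-- The pointwise conjugate exponent: `1/a + 1/a' = 1`, with `1' = ∞`, `∞' = 1`. -/
def econj (a : ℝ≥0∞) : ℝ≥0∞ := (1 - a⁻¹)⁻¹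

/-- Variable exponent Muckenhoupt constant
`[w]_{A_{p(·)}} = sup_B |B|⁻¹ ‖w χ_B‖_{p(·)} ‖w⁻¹ χ_B‖_{p'(·)}`. -/
def ApVarConst (p : Rn n → ℝ≥0∞) (w : Rn n → ℝ≥0∞) : ℝ≥0∞ :=
  ⨆ (c : Rn n) (r : ℝ) (_ : 0 < r),
    (volume (ball c r))⁻¹ * vnorm p ((ball c r).indicator w) *
      vnorm (fun x => econj (p x)) ((ball c r).indicator fun y => (w y)⁻¹)

/-- Classical Muckenhoupt `A_p` constant for `1 < p < ∞`:
`sup_B (|B|⁻¹∫_B w)(|B|⁻¹∫_B w^{1-p'})^{p-1}` with `p' = p/(p-1)`. -/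
def ApConst (p : ℝ) (w : Rn n → ℝ≥0∞) : ℝ≥0∞ :=
  ⨆ (c : Rn n) (r : ℝ) (_ : 0 < r),
    ((volume (ball c r))⁻¹ * ∫⁻ y in ball c r, w y) *
      (((volume (ball c r))⁻¹ * ∫⁻ y in ball c r, (w y) ^ (1 - p / (p - 1))) ^ (p - 1))

/-- The `A_1` constant `sup_B (|B|⁻¹∫_B w)/essinf_B w`. -/
def A1Const (w : Rn n → ℝ≥0∞) : ℝ≥0∞ :=
  ⨆ (c : Rn n) (r : ℝ) (_ : 0 < r),
    ((volume (ball c r))⁻¹ * ∫⁻ y in ball c r, w y) /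
      essInf w (volume.restrict (ball c r))

/-- `w ∈ A_p` for `1 ≤ p < ∞` (with the `A_1` condition when `p = 1`). -/
def IsAp (p : ℝ) (w : Rn n → ℝ≥0∞) : Prop :=
  if p = 1 then A1Const w < ∞ else ApConst p w < ∞

/-- `A_∞ = ⋃_{t>1} A_t`. -/
def IsAinf (w : Rn n → ℝ≥0∞) : Prop := ∃ t : ℝ, 1 < t ∧ ApConst t w < ∞

/-- The reverse Hölder constant `[w]_{RH_s} = sup_B (|B|⁻¹∫_B w^s)^{1/s}/(|B|⁻¹∫_B w)`. -/
def RHConst (s : ℝ) (w : Rn n → ℝ≥0∞) : ℝ≥0∞ :=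
  ⨆ (c : Rn n) (r : ℝ) (_ : 0 < r),
    (((volume (ball c r))⁻¹ * ∫⁻ y in ball c r, (w y) ^ s) ^ (1 / s)) /
      ((volume (ball c r))⁻¹ * ∫⁻ y in ball c r, w y)

/-- The `A_{p,q}` constant for `1 < p ≤ q < ∞`:
`sup_B (|B|⁻¹∫_B w^q)^{1/q} (|B|⁻¹∫_B w^{-p'})^{1/p'}`. -/
def ApqConst (p q : ℝ) (w : Rn n → ℝ≥0∞) : ℝ≥0∞ :=
  ⨆ (c : Rn n) (r : ℝ) (_ : 0 < r),
    (((volume (ball c r))⁻¹ * ∫⁻ y in ball c r, (w y) ^ q) ^ (1 / q)) *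
      (((volume (ball c r))⁻¹ * ∫⁻ y in ball c r, (w y) ^ (-(p / (p - 1)))) ^ (1 - 1 / p))

/-- `w ∈ A_{p,q}` for `1 ≤ p ≤ q`, with the `A_{1,q}` condition when `p = 1`. -/
def IsApq (p q : ℝ) (w : Rn n → ℝ≥0∞) : Prop :=
  if p = 1 then A1Const (fun x => (w x) ^ q) < ∞ else ApqConst p q w < ∞

/-- The variable exponent `A_{p(·),q(·)}` constant (with parameter `γ = 1/p - 1/q`):
`sup_B |B|^{γ-1} ‖w χ_B‖_{q(·)} ‖w⁻¹ χ_B‖_{p'(·)}`. -/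
def ApqVarConst (γ : ℝ) (p q : Rn n → ℝ≥0∞) (w : Rn n → ℝ≥0∞) : ℝ≥0∞ :=
  ⨆ (c : Rn n) (r : ℝ) (_ : 0 < r),
    (volume (ball c r)) ^ (γ - 1) * vnorm q ((ball c r).indicator w) *
      vnorm (fun x => econj (p x)) ((ball c r).indicator fun y => (w y)⁻¹)

/-- The Hardy–Littlewood maximal operator (over balls containing `x`). -/
def Mop (f : Rn n → ℝ≥0∞) (x : Rn n) : ℝ≥0∞ :=
  ⨆ (c : Rn n) (r : ℝ) (_ : 0 < r) (_ : x ∈ ball c r),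
    (volume (ball c r))⁻¹ * ∫⁻ y in ball c r, f y

/-- `M` is bounded on the weighted variable Lebesgue space `L^{p(·)}(w)`. -/
def MBddOn (p : Rn n → ℝ≥0∞) (w : Rn n → ℝ≥0∞) : Prop :=
  ∃ C : ℝ≥0∞, C < ∞ ∧ ∀ f : Rn n → ℝ≥0∞, Measurable f →
    vnorm p (fun x => Mop f x * w x) ≤ C * vnorm p (fun x => f x * w x)

/-- The Rubio de Francia iteration `R h = ∑_k M^k h / (2^k N^k)` where `N` bounds
the operator norm of `M`. -/
def RdF (N : ℝ≥0∞) (h : Rn n → ℝ≥0∞) (x : Rn n) : ℝ≥0∞ :=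
  ∑' k : ℕ, (Mop^[k] h) x / (2 ^ k * N ^ k)


/-- Bounded functions of compact support are dense in `L^{p(·)}(w)` when `p_+ < ∞`
and `w ∈ L^{p(·)}_{loc}`. -/
theorem boundedCompactSupport_dense {n : ℕ} (p : Rn n → ℝ≥0∞) (hpm : Measurable p)
    (hp1 : ∀ x, 1 ≤ p x) (hpplus : essSup p (volume : Measure (Rn n)) < ∞)
    (w : Rn n → ℝ≥0∞) (hwm : Measurable w)
    (hw : ∀ᵐ x ∂(volume : Measure (Rn n)), 0 < w x ∧ w x < ∞)
    (hwloc : ∀ K : Set (Rn n), IsCompact K → vnorm p (K.indicator w) < ∞)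
    (f : Rn n → ℝ) (hf : Measurable f)
    (hfLp : vnorm p (fun x => ENNReal.ofReal |f x| * w x) < ∞)
    (ε : ℝ≥0∞) (hε : 0 < ε) :
    ∃ g : Rn n → ℝ, Measurable g ∧ (∃ M : ℝ, ∀ x, |g x| ≤ M) ∧ HasCompactSupport g ∧
      vnorm p (fun x => ENNReal.ofReal |f x - g x| * w x) < ε := by
  classical
  -- the set where p = ∞ is null
  have hnull : volume {x : Rn n | p x = ∞} = 0 := by
    have h := _root_.ae_le_essSup (f := p) (μ := (volume : Measure (Rn n)))
    have h0 : volume {x : Rn n | ¬ p x ≤ essSup p volume} = 0 := ae_iff.mp h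
    refine measure_mono_null (fun x hx => ?_) h0
    simp only [Set.mem_setOf_eq] at hx ⊢
    rw [hx]
    exact not_le.mpr hpplus
  have hres : (volume : Measure (Rn n)).restrict {x : Rn n | p x = ∞} = 0 :=
    Measure.restrict_eq_zero.mpr hnull
  have hz : ∀ (F : Rn n → ℝ≥0∞) (l : ℝ≥0∞),
      essSup (fun x => F x / l) ((volume : Measure (Rn n)).restrict {x | p x = ∞}) = 0 := by
    intro F l
    rw [hres, essSup_measure_zero]; rfl
  set F : Rn n → ℝ≥0∞ := fun x => ENNReal.ofReal |f x| * w x with hF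
  -- extract a witness from the finiteness of the norm of f
  rw [vnorm] at hfLp
  obtain ⟨l0, hl0mem, hl0top⟩ := sInf_lt_iff.mp hfLp
  obtain ⟨hl0pos, hl0le⟩ := hl0mem
  rw [hz, add_zero] at hl0le
  -- choose lambda with 0 < lam < ε, lam < ∞
  set lam : ℝ≥0∞ := min (ε / 2) 1 with hlam
  have hlam0 : 0 < lam := lt_min (ENNReal.div_pos hε.ne' ofNat_ne_top) one_pos
  have hlamtop : lam ≠ ∞ := ((min_le_right _ _).trans_lt one_lt_top).ne
  have hlamlt : lam < ε := by
    rcases eq_or_ne ε ∞ with hεi | hεi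
    · exact hεi ▸ ((min_le_right _ _).trans_lt one_lt_top)
    · exact (min_le_left _ _).trans_lt (ENNReal.half_lt_self hε.ne' hεi)
  set pp : ℝ := (essSup p (volume : Measure (Rn n))).toReal with hpp
  set C : ℝ≥0∞ := (max 1 (l0 / lam)) ^ pp with hC
  have hCtop : C < ∞ :=
    ENNReal.rpow_lt_top_of_nonneg ENNReal.toReal_nonneg
      (max_lt one_lt_top (ENNReal.div_lt_top hl0top.ne hlam0.ne')).ne
  -- truncations
  set gk : ℕ → Rn n → ℝ := fun k x => if |f x| ≤ (k : ℝ) ∧ ‖x‖ ≤ (k : ℝ) then f x else 0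
    with hgk
  have hgkm : ∀ k, Measurable (gk k) := by
    intro k
    exact Measurable.ite
      ((measurableSet_le hf.abs measurable_const).inter
        (measurableSet_le measurable_norm measurable_const)) hf measurable_const
  set Fk : ℕ → Rn n → ℝ≥0∞ := fun k x => ENNReal.ofReal |f x - gk k x| * w x with hFk
  set hk : ℕ → Rn n → ℝ≥0∞ := fun k x => (Fk k x / lam) ^ (p x).toReal with hhk
  have hFkF : ∀ k x, Fk k x ≤ F x := by
    intro k x
    refine mul_le_mul_left (ENNReal.ofReal_le_ofReal ?_) _
    by_cases hc : |f x| ≤ (k : ℝ) ∧ ‖x‖ ≤ (k : ℝ) <;> simp [hgk, hc, abs_nonneg]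
  have hkmeas : ∀ k, Measurable (hk k) := by
    intro k
    exact ((((hf.sub (hgkm k)).abs.ennreal_ofReal).mul hwm).div_const lam).pow
      hpm.ennreal_toReal
  set bound : Rn n → ℝ≥0∞ := fun x => C * (F x / l0) ^ (p x).toReal with hbdef
  have hSmeas : MeasurableSet {x : Rn n | p x ≠ ∞} :=
    (hpm (measurableSet_singleton ∞)).compl
  -- domination
  have h_bound : ∀ k, hk k ≤ᵐ[(volume : Measure (Rn n)).restrict {x | p x ≠ ∞}] bound := by
    intro k
    have h1 : ∀ᵐ x ∂((volume : Measure (Rn n)).restrict {x | p x ≠ ∞}),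
        p x ≤ essSup p volume := ae_restrict_of_ae (_root_.ae_le_essSup (f := p))
    filter_upwards [h1, ae_restrict_mem hSmeas] with x hx1 hx2
    have ht0 : (0:ℝ) ≤ (p x).toReal := ENNReal.toReal_nonneg
    have htle : (p x).toReal ≤ pp := ENNReal.toReal_mono hpplus.ne hx1
    have step1 : hk k x ≤ (F x / lam) ^ (p x).toReal :=
      ENNReal.rpow_le_rpow (ENNReal.div_le_div_right (hFkF k x) lam) ht0
    have step2 : (F x / lam) = F x / l0 * (l0 / lam) := by
      rw [div_eq_mul_inv (F x) l0, div_eq_mul_inv l0 lam, mul_assoc, ← mul_assoc l0⁻¹,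
        ENNReal.inv_mul_cancel hl0pos.ne' hl0top.ne, one_mul, ← div_eq_mul_inv]
    calc hk k x ≤ (F x / lam) ^ (p x).toReal := step1
      _ = (F x / l0) ^ (p x).toReal * (l0 / lam) ^ (p x).toReal := by
          rw [step2, ENNReal.mul_rpow_of_nonneg _ _ ht0]
      _ ≤ (F x / l0) ^ (p x).toReal * (max 1 (l0 / lam)) ^ (p x).toReal :=
          mul_le_mul_right (ENNReal.rpow_le_rpow (le_max_right _ _) ht0) _
      _ ≤ (F x / l0) ^ (p x).toReal * C :=
          mul_le_mul_right (ENNReal.rpow_le_rpow_of_exponent_le (le_max_left _ _) htle) _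
      _ = bound x := mul_comm _ _
  have h_fin : (∫⁻ x in {x : Rn n | p x ≠ ∞}, bound x) ≠ ∞ := by
    have hlt : (∫⁻ x in {x : Rn n | p x ≠ ∞}, bound x) < ∞ := by
      simp only [hbdef]
      calc (∫⁻ x in {x : Rn n | p x ≠ ∞}, C * (F x / l0) ^ (p x).toReal)
          = C * ∫⁻ x in {x : Rn n | p x ≠ ∞}, (F x / l0) ^ (p x).toReal :=
            lintegral_const_mul' _ _ hCtop.ne
        _ ≤ C * 1 := mul_le_mul_right hl0le _
        _ < ∞ := by rw [mul_one]; exact hCtop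
    exact hlt.ne
  -- pointwise convergence
  have h_lim : ∀ᵐ x ∂((volume : Measure (Rn n)).restrict {x | p x ≠ ∞}),
      Filter.Tendsto (fun k => hk k x) Filter.atTop (nhds 0) := by
    filter_upwards [ae_restrict_mem hSmeas] with x hx2
    have htpos : 0 < (p x).toReal :=
      ENNReal.toReal_pos (lt_of_lt_of_le zero_lt_one (hp1 x)).ne' hx2
    obtain ⟨K, hK⟩ := exists_nat_ge (max |f x| ‖x‖)
    have hev : ∀ᶠ k in Filter.atTop, hk k x = 0 := by
      rw [Filter.eventually_atTop]
      refine ⟨K, fun k hk' => ?_⟩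
      have hcond : |f x| ≤ (k : ℝ) ∧ ‖x‖ ≤ (k : ℝ) :=
        ⟨(le_max_left _ _).trans (hK.trans (Nat.cast_le.mpr hk')),
         (le_max_right _ _).trans (hK.trans (Nat.cast_le.mpr hk'))⟩
      simp [hhk, hFk, hgk, hcond, ENNReal.zero_rpow_of_pos htpos]
    exact Filter.Tendsto.congr' (hev.mono fun k h => h.symm) tendsto_const_nhds
  have hmain : Filter.Tendsto (fun k => ∫⁻ x in {x : Rn n | p x ≠ ∞}, hk k x)
      Filter.atTop (nhds 0) := by
    have := tendsto_lintegral_of_dominated_convergence (μ :=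
        (volume : Measure (Rn n)).restrict {x | p x ≠ ∞}) (F := hk) (f := fun _ => 0)
        bound hkmeas h_bound h_fin h_lim
    simpa using this
  have hev1 : ∀ᶠ k in Filter.atTop,
      (∫⁻ x in {x : Rn n | p x ≠ ∞}, hk k x) < 1 :=
    hmain.eventually_lt_const one_pos
  obtain ⟨k, hk1⟩ := hev1.exists
  refine ⟨gk k, hgkm k, ⟨k, fun x => ?_⟩, ?_, ?_⟩
  · by_cases hc : |f x| ≤ (k : ℝ) ∧ ‖x‖ ≤ (k : ℝ)
    · simpa [hgk, hc] using hc.1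
    · simp [hgk, hc]
  · refine HasCompactSupport.intro (isCompact_closedBall (0 : Rn n) k) fun x hx => ?_
    have hxn : ¬ ‖x‖ ≤ (k : ℝ) := by
      rw [Metric.mem_closedBall, dist_zero_right] at hx
      exact hx
    simp [hgk, hxn]
  · have hmem : lam ∈ {l : ℝ≥0∞ | 0 < l ∧
        (∫⁻ x in {x : Rn n | p x ≠ ∞}, (Fk k x / l) ^ (p x).toReal) +
          essSup (fun x => Fk k x / l) (volume.restrict {x | p x = ∞}) ≤ 1} := by
      refine ⟨hlam0, ?_⟩
      rw [hz, add_zero]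
      exact hk1.le
    exact lt_of_le_of_lt (sInf_le hmem) hlamlt

end
end

section
/- Let $p(\cdot) \in \mathcal{P}$ with $p_+ < \infty$ and let $w$ be a weight with $w \in L^{p(\cdot)}_{loc}$. Then the continuous functions of compact support are dense in $L^{p(\cdot)}(w)$. -/
/-!
Because `p_+ < ∞`, the Luxemburg norm is governed by the modular `ρ(f) = ∫ (|f| w)^{p(x)}`:
`ρ` is finite at every scale as soon as it is finite at one, and it satisfies the quasi-triangle
inequality `ρ(f - h) ≤ 2^{p_+ - 1} (ρ(f - g) + ρ(g - h))`. So it suffices to make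
`ρ((f - g) / λ) ≤ 1` for some `λ < ε`. Truncating `f` in height and to a large compact set makes
`ρ(f - u)` small by dominated convergence. The bounded, compactly supported `u` is the a.e. limit
of continuous compactly supported `g_j` (`L¹` approximation with summable errors); after clamping
the `g_j` to the bound of `u` and cutting them off near the support of `u`, the errors are
dominated by a multiple of `w χ_K` with `K` compact, whose modular is finite since
`w ∈ L^{p(·)}_loc`, and dominated convergence applies again.
-/

open MeasureTheory Metric ENNReal

noncomputable section

variable {n : ℕ}

open Filter Topology Set

section Modular

variable {X : Type*} [MeasurableSpace X] {μ : Measure X} {t : X → ℝ} {P : ℝ}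

theorem lintegral_const_mul_rpow_le (ht : ∀ᵐ x ∂μ, 0 ≤ t x ∧ t x ≤ P) {c : ℝ≥0∞}
    (hc : c ≠ ∞) (h : X → ℝ≥0∞) :
    ∫⁻ x, (c * h x) ^ t x ∂μ ≤ max c 1 ^ P * ∫⁻ x, h x ^ t x ∂μ := by
  rw [← lintegral_const_mul' _ _ (rpow_ne_top_of_ne_zero (by simp) (by simp [hc]))]
  refine lintegral_mono_ae ?_
  filter_upwards [ht] with x ⟨ht0, htP⟩
  rw [mul_rpow_of_nonneg _ _ ht0]
  gcongr
  calc c ^ t x ≤ max c 1 ^ t x := by gcongr; exact le_max_left _ _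
    _ ≤ max c 1 ^ P := rpow_le_rpow_of_exponent_le (le_max_right _ _) htP

theorem lintegral_const_mul_rpow_ne_top (ht : ∀ᵐ x ∂μ, 0 ≤ t x ∧ t x ≤ P) {c : ℝ≥0∞}
    (hc : c ≠ ∞) {h : X → ℝ≥0∞} (hh : ∫⁻ x, h x ^ t x ∂μ ≠ ∞) :
    ∫⁻ x, (c * h x) ^ t x ∂μ ≠ ∞ :=
  ne_top_of_le_ne_top (mul_ne_top (rpow_ne_top_of_ne_zero (by simp) (by simp [hc])) hh)
    (lintegral_const_mul_rpow_le ht hc h)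

theorem lintegral_add_rpow_le (ht : ∀ᵐ x ∂μ, 1 ≤ t x ∧ t x ≤ P) {a b : X → ℝ≥0∞}
    (ha : AEMeasurable (fun x => a x ^ t x) μ) :
    ∫⁻ x, (a x + b x) ^ t x ∂μ ≤
      2 ^ (P - 1) * (∫⁻ x, a x ^ t x ∂μ + ∫⁻ x, b x ^ t x ∂μ) := by
  rw [← lintegral_add_left' ha,
    ← lintegral_const_mul' _ _ (rpow_ne_top_of_ne_zero two_ne_zero ofNat_ne_top)]
  refine lintegral_mono_ae ?_
  filter_upwards [ht] with x ⟨ht1, htP⟩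
  calc (a x + b x) ^ t x ≤ 2 ^ (t x - 1) * (a x ^ t x + b x ^ t x) :=
        rpow_add_le_mul_rpow_add_rpow _ _ ht1
    _ ≤ 2 ^ (P - 1) * (a x ^ t x + b x ^ t x) := by
        gcongr
        exact one_le_two

def weightedModular (μ : Measure X) (t : X → ℝ) (w : X → ℝ≥0∞) (f : X → ℝ) : ℝ≥0∞ :=
  ∫⁻ x, (ENNReal.ofReal |f x| * w x) ^ t x ∂μ

variable {w : X → ℝ≥0∞}

theorem weightedModular_sub_le (ht : ∀ᵐ x ∂μ, 1 ≤ t x ∧ t x ≤ P) (htm : Measurable t)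
    (hw : Measurable w) {f g h : X → ℝ} (hf : Measurable f) (hg : Measurable g) :
    weightedModular μ t w (f - h) ≤
      2 ^ (P - 1) * (weightedModular μ t w (f - g) + weightedModular μ t w (g - h)) := by
  refine le_trans (lintegral_mono_ae ?_)
    (lintegral_add_rpow_le ht (((hf.sub hg).abs.ennreal_ofReal.mul hw).pow htm).aemeasurable)
  filter_upwards [ht] with x hx
  refine rpow_le_rpow ?_ (by linarith)
  rw [← add_mul, ← ofReal_add (abs_nonneg _) (abs_nonneg _)]
  gcongr
  exact abs_sub_le _ _ _

theorem weightedModular_indicator_const_ne_top (ht : ∀ᵐ x ∂μ, 0 ≤ t x ∧ t x ≤ P) {K : Set X}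
    (hK : ∫⁻ x, K.indicator w x ^ t x ∂μ ≠ ∞) (c : ℝ) :
    weightedModular μ t w (K.indicator fun _ => c) ≠ ∞ := by
  have h x : ENNReal.ofReal |K.indicator (fun _ => c) x| * w x =
      ENNReal.ofReal |c| * K.indicator w x := by
    by_cases hx : x ∈ K <;> simp [hx]
  simpa only [weightedModular, h] using lintegral_const_mul_rpow_ne_top ht ofReal_ne_top hK

theorem tendsto_weightedModular_zero (ht : ∀ᵐ x ∂μ, 0 < t x) (htm : Measurable t)
    (hw : Measurable w) (hw_fin : ∀ᵐ x ∂μ, w x ≠ ∞) {F : ℕ → X → ℝ} (hF : ∀ j, Measurable (F j))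
    {G : X → ℝ} (hFG : ∀ j x, |F j x| ≤ |G x|) (hG : weightedModular μ t w G ≠ ∞)
    (hlim : ∀ᵐ x ∂μ, Tendsto (fun j => F j x) atTop (𝓝 0)) :
    Tendsto (fun j => weightedModular μ t w (F j)) atTop (𝓝 0) := by
  have hdom := tendsto_lintegral_of_dominated_convergence (μ := μ) (f := 0)
    (F := fun j x => (ENNReal.ofReal |F j x| * w x) ^ t x)
    (fun x => (ENNReal.ofReal |G x| * w x) ^ t x)
    (fun j => (((hF j).abs.ennreal_ofReal.mul hw).pow htm))
    (fun j => by
      filter_upwards [ht] with x hx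
      refine rpow_le_rpow ?_ hx.le
      gcongr ?_ * _
      exact ofReal_le_ofReal (hFG j x))
    hG (by
      filter_upwards [ht, hw_fin, hlim] with x htx hwx hx
      have h0 : Tendsto (fun j => ENNReal.ofReal |F j x|) atTop (𝓝 0) := by
        simpa [Function.comp_def] using
          ((ENNReal.continuous_ofReal.comp continuous_abs).tendsto 0).comp hx
      have h1 := ((ENNReal.continuous_rpow_const (y := t x)).tendsto 0).comp
        (by simpa using ENNReal.Tendsto.mul_const h0 (Or.inr hwx))
      simpa [Function.comp_def, zero_rpow_of_pos htx] using h1)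
  simpa [weightedModular] using hdom

theorem tendsto_weightedModular_sub_indicator (ht : ∀ᵐ x ∂μ, 0 < t x) (htm : Measurable t)
    (hw : Measurable w) (hw_fin : ∀ᵐ x ∂μ, w x ≠ ∞) {s : ℕ → Set X}
    (hs : ∀ k, MeasurableSet (s k)) (hs_cover : ∀ x, ∀ᶠ k in atTop, x ∈ s k) {f : X → ℝ}
    (hf : Measurable f) (hρ : weightedModular μ t w f ≠ ∞) :
    Tendsto (fun k : ℕ => weightedModular μ t w (f - (s k ∩ {x | |f x| ≤ k}).indicator f))
      atTop (𝓝 0) := by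
  refine tendsto_weightedModular_zero ht htm hw hw_fin
    (fun k => hf.sub (hf.indicator ((hs k).inter (measurableSet_le hf.abs measurable_const))))
    (fun k x => ?_) hρ (ae_of_all _ fun x => tendsto_const_nhds.congr' ?_)
  · by_cases hx : x ∈ s k ∩ {x | |f x| ≤ k} <;> simp [hx]
  · filter_upwards [hs_cover x, tendsto_natCast_atTop_atTop.eventually_ge_atTop |f x|]
      with k hxk hfk
    simp [indicator_of_mem (show x ∈ s k ∩ {x | |f x| ≤ k} from ⟨hxk, hfk⟩)]

end Modular

theorem abs_sub_mul_clamp_le_two_mul {M a b c : ℝ} (ha : |a| ≤ M) (hc : c ∈ Icc (0 : ℝ) 1) :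
    |a - c * max (-M) (min M b)| ≤ 2 * M := by
  rw [abs_le] at ha ⊢
  obtain ⟨hc0, hc1⟩ := hc
  constructor <;> cases max_cases (-M) (min M b) <;> cases min_cases M b <;> nlinarith

theorem abs_sub_mul_clamp_le {M a b c : ℝ} (ha : |a| ≤ M) (hc : c ∈ Icc (0 : ℝ) 1)
    (hac : c = 1 ∨ a = 0) : |a - c * max (-M) (min M b)| ≤ |a - b| := by
  rw [abs_le] at ha
  obtain ⟨hc0, hc1⟩ := hc
  rcases hac with rfl | rfl
  · rw [one_mul]
    cases max_cases (-M) (min M b) <;> cases min_cases M b <;>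
      cases abs_cases (a - b) <;> cases abs_cases (a - max (-M) (min M b)) <;> linarith
  · rw [zero_sub, zero_sub, abs_neg, abs_neg, abs_mul, abs_of_nonneg hc0]
    refine (mul_le_of_le_one_left (abs_nonneg _) hc1).trans ?_
    cases max_cases (-M) (min M b) <;> cases min_cases M b <;>
      cases abs_cases b <;> cases abs_cases (max (-M) (min M b)) <;> linarith

theorem MeasureTheory.Integrable.exists_seq_hasCompactSupport_tendsto_ae {X : Type*}
    [TopologicalSpace X] [NormalSpace X] [R1Space X] [WeaklyLocallyCompactSpace X]
    [MeasurableSpace X] [BorelSpace X] {μ : Measure X} [μ.Regular] {u : X → ℝ} (hu : Integrable u μ) :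
    ∃ g : ℕ → X → ℝ, (∀ j, Continuous (g j) ∧ HasCompactSupport (g j)) ∧
      ∀ᵐ x ∂μ, Tendsto (fun j => g j x) atTop (𝓝 (u x)) := by
  choose g hg_supp hg_close hg_cont _ using fun j : ℕ =>
    hu.exists_hasCompactSupport_lintegral_sub_le (by simp : (2 : ℝ≥0∞)⁻¹ ^ j ≠ 0)
  refine ⟨g, fun j => ⟨hg_cont j, hg_supp j⟩, ?_⟩
  have hmeas : ∀ j, AEMeasurable (fun x => ‖u x - g j x‖ₑ) μ :=
    fun j => (hu.aestronglyMeasurable.sub (hg_cont j).aestronglyMeasurable).enorm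
  have hsum : ∫⁻ x, ∑' j, ‖u x - g j x‖ₑ ∂μ ≠ ∞ := by
    rw [lintegral_tsum hmeas]
    refine ne_top_of_le_ne_top ?_ (ENNReal.tsum_le_tsum hg_close)
    rw [ENNReal.tsum_geometric, ENNReal.one_sub_inv_two, inv_inv]
    exact ofNat_ne_top
  filter_upwards [ae_lt_top' (AEMeasurable.tsum hmeas) hsum] with x hx
  rw [tendsto_iff_edist_tendsto_0]
  simpa [edist_comm, edist_eq_enorm_sub] using ENNReal.tendsto_atTop_zero_of_tsum_ne_top hx.ne

theorem exists_continuous_weightedModular_sub_lt_of_bounded {X : Type*} [TopologicalSpace X]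
    [RegularSpace X] [NormalSpace X] [LocallyCompactSpace X] [MeasurableSpace X] [BorelSpace X]
    {μ : Measure X} [μ.Regular] {t : X → ℝ} {P : ℝ} {w : X → ℝ≥0∞}
    (ht : ∀ᵐ x ∂μ, 0 < t x ∧ t x ≤ P) (htm : Measurable t) (hw : Measurable w)
    (hw_fin : ∀ᵐ x ∂μ, w x ≠ ∞) (hloc : ∀ K, IsCompact K → ∫⁻ x, K.indicator w x ^ t x ∂μ ≠ ∞)
    {u : X → ℝ} (hu : Measurable u) {K : Set X} (hK : IsCompact K) (huK : ∀ x ∉ K, u x = 0)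
    {M : ℝ} (hM : ∀ x, |u x| ≤ M) {η : ℝ≥0∞} (hη : 0 < η) :
    ∃ g : X → ℝ, Continuous g ∧ HasCompactSupport g ∧ weightedModular μ t w (u - g) < η := by
  have hu_int : Integrable u μ := by
    rw [← integrableOn_iff_integrable_of_support_subset (s := K)
      fun x hx => by_contra fun h => hx (huK x h)]
    exact Measure.integrableOn_of_bounded hK.measure_ne_top hu.aestronglyMeasurable
      (ae_of_all _ fun x => (Real.norm_eq_abs _).trans_le (hM x))
  obtain ⟨g, hg, hlim⟩ := hu_int.exists_seq_hasCompactSupport_tendsto_ae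
  obtain ⟨φ, hφK, -, hφ_supp, hφ01⟩ :=
    exists_continuous_one_zero_of_isCompact hK isClosed_empty (disjoint_empty K)
  -- Clamping to `[-M, M]` and cutting off by `φ` keep the approximants dominated by a fixed
  -- function supported in the compact set `K ∪ tsupport φ`.
  set G : ℕ → X → ℝ := fun j x => φ x * max (-M) (min M (g j x))
  have hG : ∀ j, Continuous (G j) :=
    fun j => φ.continuous.mul (continuous_const.max (continuous_const.min (hg j).1))
  have hdom : ∀ j x, |(u - G j) x| ≤ |(K ∪ tsupport φ).indicator (fun _ => 2 * M) x| := by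
    intro j x
    by_cases hx : x ∈ K ∪ tsupport φ
    · have hM0 : 0 ≤ 2 * M := by linarith [abs_nonneg (u x), hM x]
      rw [indicator_of_mem hx, abs_of_nonneg hM0]
      exact abs_sub_mul_clamp_le_two_mul (hM x) (hφ01 x)
    · have hux : u x = 0 := huK x fun h => hx (Or.inl h)
      have hφx : φ x = 0 := image_eq_zero_of_notMem_tsupport fun h => hx (Or.inr h)
      simp [G, hux, hφx, hx]
  have hφu : ∀ x, φ x = 1 ∨ u x = 0 := fun x => by
    by_cases hx : x ∈ K
    · exact Or.inl (hφK hx)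
    · exact Or.inr (huK x hx)
  have hG_lim : ∀ᵐ x ∂μ, Tendsto (fun j => (u - G j) x) atTop (𝓝 0) := by
    filter_upwards [hlim] with x hx
    refine squeeze_zero_norm (fun j => (Real.norm_eq_abs _).trans_le
      (abs_sub_mul_clamp_le (hM x) (hφ01 x) (hφu x))) ?_
    simpa using (hx.const_sub (u x)).abs
  have hρ := tendsto_weightedModular_zero (ht.mono fun x hx => hx.1) htm hw hw_fin
    (fun j => hu.sub (hG j).measurable) hdom
    (weightedModular_indicator_const_ne_top (ht.mono fun x hx => ⟨hx.1.le, hx.2⟩)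
      (hloc _ (hK.union hφ_supp.isCompact)) _) hG_lim
  obtain ⟨j, hj⟩ := (hρ.eventually_lt_const hη).exists
  exact ⟨G j, hG j, hφ_supp.mul_right, hj⟩

theorem exists_continuous_weightedModular_sub_lt {X : Type*} [TopologicalSpace X] [T2Space X]
    [LocallyCompactSpace X] [SigmaCompactSpace X] [MeasurableSpace X] [BorelSpace X]
    {μ : Measure X} [μ.Regular] {t : X → ℝ} {P : ℝ} {w : X → ℝ≥0∞}
    (ht : ∀ᵐ x ∂μ, 1 ≤ t x ∧ t x ≤ P) (htm : Measurable t) (hw : Measurable w)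
    (hw_fin : ∀ᵐ x ∂μ, w x ≠ ∞) (hloc : ∀ K, IsCompact K → ∫⁻ x, K.indicator w x ^ t x ∂μ ≠ ∞)
    {f : X → ℝ} (hf : Measurable f) (hρ : weightedModular μ t w f ≠ ∞) {η : ℝ≥0∞} (hη : 0 < η) :
    ∃ g : X → ℝ, Continuous g ∧ HasCompactSupport g ∧ weightedModular μ t w (f - g) < η := by
  have ht_pos : ∀ᵐ x ∂μ, 0 < t x ∧ t x ≤ P :=
    ht.mono fun x hx => ⟨zero_lt_one.trans_le hx.1, hx.2⟩
  set C : ℝ≥0∞ := 2 ^ (P - 1)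
  have hC0 : C ≠ 0 := (rpow_pos two_pos ofNat_ne_top).ne'
  have hC : C ≠ ∞ := rpow_ne_top_of_ne_zero two_ne_zero ofNat_ne_top
  set δ : ℝ≥0∞ := η / C / 2
  have hδ : 0 < δ := ENNReal.div_pos (ENNReal.div_pos hη.ne' hC).ne' ofNat_ne_top
  let K := CompactExhaustion.choice X
  have hK_cover : ∀ x, ∀ᶠ k in atTop, x ∈ K k := fun x =>
    let ⟨m, hm⟩ := K.exists_mem x
    eventually_atTop.2 ⟨m, fun k hk => K.subset hk hm⟩
  obtain ⟨k, hk⟩ := ((tendsto_weightedModular_sub_indicator (ht_pos.mono fun x hx => hx.1) htm hw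
    hw_fin (fun k => (K.isCompact k).measurableSet) hK_cover hf hρ).eventually_lt_const hδ).exists
  set u := (K k ∩ {x | |f x| ≤ k}).indicator f
  have hu : Measurable u :=
    hf.indicator ((K.isCompact k).measurableSet.inter (measurableSet_le hf.abs measurable_const))
  have hu_bdd : ∀ x, |u x| ≤ k := fun x => by
    by_cases hx : x ∈ K k ∩ {x | |f x| ≤ k}
    · simpa [u, hx] using hx.2
    · simp [u, hx]
  obtain ⟨g, hg, hg_supp, hug⟩ := exists_continuous_weightedModular_sub_lt_of_bounded ht_pos htm hw
    hw_fin hloc hu (K.isCompact k) (fun x hx => indicator_of_notMem (fun h => hx h.1) f) hu_bdd hδ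
  refine ⟨g, hg, hg_supp, ?_⟩
  calc weightedModular μ t w (f - g)
      ≤ C * (weightedModular μ t w (f - u) + weightedModular μ t w (u - g)) :=
        weightedModular_sub_le ht htm hw hf hu
    _ < C * (δ + δ) := (ENNReal.mul_lt_mul_iff_right hC0 hC).2 (ENNReal.add_lt_add hk hug)
    _ = C * (η / C) := by rw [ENNReal.add_halves]
    _ ≤ η := ENNReal.mul_div_le

theorem vnorm_le_of_lintegral_le_one {p f : Rn n → ℝ≥0∞} (hp : ∀ᵐ x, p x ≠ ∞) {l : ℝ≥0∞}
    (hl : 0 < l) (h : ∫⁻ x, (f x / l) ^ (p x).toReal ≤ 1) : vnorm p f ≤ l := by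
  have hnull : volume {x | p x = ∞} = 0 := by simpa [ae_iff] using hp
  refine sInf_le ⟨hl, ?_⟩
  rwa [Measure.restrict_eq_self_of_ae_mem (s := {x | p x ≠ ∞}) hp,
    Measure.restrict_eq_zero.2 hnull, essSup_measure_zero, bot_eq_zero, add_zero]

theorem lintegral_mul_rpow_ne_top_of_vnorm_lt_top {p f : Rn n → ℝ≥0∞}
    (hp : essSup p volume ≠ ∞) (hf : vnorm p f < ∞) {c : ℝ≥0∞} (hc : c ≠ ∞) :
    ∫⁻ x, (c * f x) ^ (p x).toReal ≠ ∞ := by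
  have hp_fin : ∀ᵐ x, p x ≠ ∞ := (ae_lt_of_essSup_lt hp.lt_top).mono fun x hx => hx.ne
  have hpP : ∀ᵐ x, 0 ≤ (p x).toReal ∧ (p x).toReal ≤ (essSup p volume).toReal :=
    (ae_le_essSup p).mono fun x hx => ⟨toReal_nonneg, toReal_mono hp hx⟩
  obtain ⟨l, ⟨hl0, hl⟩, hl_top⟩ := sInf_lt_iff.1 hf
  rw [Measure.restrict_eq_self_of_ae_mem (s := {x | p x ≠ ∞}) hp_fin] at hl
  have hcl x : c * f x = c * l * (f x / l) := by
    rw [mul_assoc, ENNReal.mul_div_cancel hl0.ne' hl_top.ne]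
  simp_rw [hcl]
  exact lintegral_const_mul_rpow_ne_top hpP (mul_ne_top hc hl_top.ne)
    (ne_top_of_le_ne_top one_ne_top (le_self_add.trans hl))

/-- Continuous functions of compact support are dense in `L^{p(·)}(w)` when `p_+ < ∞`
and `w ∈ L^{p(·)}_{loc}`. -/
theorem continuousCompactSupport_dense {n : ℕ} (p : Rn n → ℝ≥0∞) (hpm : Measurable p)
    (hp1 : ∀ x, 1 ≤ p x) (hpplus : essSup p (volume : Measure (Rn n)) < ∞)
    (w : Rn n → ℝ≥0∞) (hwm : Measurable w)
    (hw : ∀ᵐ x ∂(volume : Measure (Rn n)), 0 < w x ∧ w x < ∞)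
    (hwloc : ∀ K : Set (Rn n), IsCompact K → vnorm p (K.indicator w) < ∞)
    (f : Rn n → ℝ) (hf : Measurable f)
    (hfLp : vnorm p (fun x => ENNReal.ofReal |f x| * w x) < ∞)
    (ε : ℝ≥0∞) (hε : 0 < ε) :
    ∃ g : Rn n → ℝ, Continuous g ∧ HasCompactSupport g ∧
      vnorm p (fun x => ENNReal.ofReal |f x - g x| * w x) < ε := by
  have hp_fin : ∀ᵐ x, p x ≠ ∞ := (ae_lt_of_essSup_lt hpplus).mono fun x hx => hx.ne
  have ht : ∀ᵐ x, 1 ≤ (p x).toReal ∧ (p x).toReal ≤ (essSup p volume).toReal := by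
    filter_upwards [hp_fin, ae_le_essSup p] with x hx hxP
    exact ⟨by simpa using toReal_mono hx (hp1 x), toReal_mono hpplus.ne hxP⟩
  obtain ⟨l, hl0, hlε⟩ := exists_between hε
  have hl : l⁻¹ ≠ ∞ := inv_ne_top.2 hl0.ne'
  have hloc K (hK : IsCompact K) :
      ∫⁻ x, K.indicator (fun x => l⁻¹ * w x) x ^ (p x).toReal ≠ ∞ := by
    simpa only [indicator_const_mul] using
      lintegral_mul_rpow_ne_top_of_vnorm_lt_top hpplus.ne (hwloc K hK) hl
  have hρ : weightedModular volume (fun x => (p x).toReal) (fun x => l⁻¹ * w x) f ≠ ∞ := by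
    simpa only [weightedModular, mul_left_comm] using
      lintegral_mul_rpow_ne_top_of_vnorm_lt_top hpplus.ne hfLp hl
  obtain ⟨g, hg, hg_supp, hfg⟩ := exists_continuous_weightedModular_sub_lt ht
    hpm.ennreal_toReal (hwm.const_mul _) (hw.mono fun x hx => mul_ne_top hl hx.2.ne) hloc hf hρ
    one_pos
  refine ⟨g, hg, hg_supp, (vnorm_le_of_lintegral_le_one hp_fin hl0 ?_).trans_lt hlε⟩
  simpa only [weightedModular, Pi.sub_apply, div_eq_mul_inv, mul_assoc, mul_comm, mul_left_comm]
    using hfg.le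
end
end

section
/- Let $p(\cdot), q(\cdot) \in \mathcal{P}$ with $1 < p(x) \le q(x) < \infty$, and suppose there exists $\sigma > 1$ with $1/p(x) - 1/q(x) = 1/\sigma'$ for all $x$. Then $w \in A_{p(\cdot),q(\cdot)}$ if and only if $w^\sigma \in A_{q(\cdot)/\sigma}$. -/
open MeasureTheory Metric ENNReal

noncomputable section

variable {n : ℕ}

/-! Raising a weight to the power `σ` turns the `A_{p(·),q(·)}` quantity into the
`A_{q(·)/σ}` quantity ball by ball. The modular of `f^σ` for the exponent `r/σ` at
level `λ^σ` equals the modular of `f` for `r` at level `λ`, so `‖f^σ‖_{r/σ} = ‖f‖_r^σ`.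
The exponent relation makes the conjugate of `q/σ` equal to `p'/σ`, and
`(|B|^{γ-1})^σ = |B|⁻¹` for `γ = 1 - 1/σ`. Hence `[w^σ]_{A_{q/σ}} = [w]_{A_{p,q}}^σ`. -/

lemma ENNReal.sInf_image_rpow {σ : ℝ} (hσ : 0 < σ) (s : Set ℝ≥0∞) :
    sInf ((· ^ σ) '' s) = sInf s ^ σ := by
  rw [sInf_image]
  exact ((ENNReal.orderIsoRpow σ hσ).map_sInf s).symm

lemma ENNReal.iSup_rpow {ι : Sort*} {σ : ℝ} (hσ : 0 < σ) (g : ι → ℝ≥0∞) :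
    (⨆ i, g i) ^ σ = ⨆ i, g i ^ σ :=
  (ENNReal.orderIsoRpow σ hσ).map_iSup g

lemma vnorm_of_ne_top {e : Rn n → ℝ≥0∞} (he : ∀ x, e x ≠ ∞) (f : Rn n → ℝ≥0∞) :
    vnorm e f = sInf {l | 0 < l ∧ ∫⁻ x, (f x / l) ^ (e x).toReal ≤ 1} := by
  have hfin : {x | e x ≠ ∞} = Set.univ := Set.eq_univ_of_forall he
  have hinf : {x | e x = ∞} = ∅ := Set.eq_empty_of_forall_notMem he
  simp only [vnorm, hfin, hinf, Measure.restrict_univ, Measure.restrict_empty,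
    essSup_measure_zero, bot_eq_zero, add_zero]

lemma vnorm_rpow {σ : ℝ} (hσ : 0 < σ) {e : Rn n → ℝ≥0∞} (he : ∀ x, e x ≠ ∞)
    (f : Rn n → ℝ≥0∞) :
    vnorm (fun x => e x / ENNReal.ofReal σ) (fun x => f x ^ σ) = vnorm e f ^ σ := by
  have hσ' : ENNReal.ofReal σ ≠ 0 := by simpa using hσ
  have he' : ∀ x, e x / ENNReal.ofReal σ ≠ ∞ := fun x =>
    ENNReal.div_ne_top (he x) hσ'
  have modular (m : ℝ≥0∞) (x : Rn n) :
      (f x ^ σ / m ^ σ) ^ (e x / ENNReal.ofReal σ).toReal = (f x / m) ^ (e x).toReal := by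
    rw [← ENNReal.div_rpow_of_nonneg _ _ hσ.le, ← ENNReal.rpow_mul, ENNReal.toReal_div,
      ENNReal.toReal_ofReal hσ.le, mul_div_cancel₀ _ hσ.ne']
  rw [vnorm_of_ne_top he, vnorm_of_ne_top he', ← ENNReal.sInf_image_rpow hσ]
  congr 1
  ext l
  constructor
  · rintro ⟨hl, hI⟩
    have hroot : (l ^ σ⁻¹) ^ σ = l := ENNReal.rpow_inv_rpow hσ.ne' l
    refine ⟨l ^ σ⁻¹, ⟨ENNReal.rpow_pos_of_nonneg hl (inv_nonneg.2 hσ.le), ?_⟩, hroot⟩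
    simpa only [← modular, hroot] using hI
  · rintro ⟨m, ⟨hm, hI⟩, rfl⟩
    exact ⟨ENNReal.rpow_pos_of_nonneg hm hσ.le, by simpa only [modular] using hI⟩

lemma econj_ne_top {a : ℝ≥0∞} (ha : 1 < a) : econj a ≠ ∞ := by
  rw [econj, Ne, ENNReal.inv_eq_top, tsub_eq_zero_iff_le, not_le]
  exact ENNReal.inv_lt_one.2 ha

lemma econj_div_ofReal {σ : ℝ} (hσ : 1 ≤ σ) {a b : ℝ≥0∞}
    (hab : a⁻¹ = b⁻¹ + ENNReal.ofReal (1 - 1 / σ)) :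
    econj (b / ENNReal.ofReal σ) = econj a / ENNReal.ofReal σ := by
  set s := ENNReal.ofReal σ
  have hs0 : s ≠ 0 := by simpa [s] using zero_lt_one.trans_le hσ
  have hs1 : 1 ≤ s := by simpa [s] using hσ
  have hab' : 1 - a⁻¹ = s⁻¹ - b⁻¹ := by
    rw [hab, ENNReal.ofReal_sub _ (by positivity), ENNReal.ofReal_one, one_div,
      ENNReal.ofReal_inv_of_pos (zero_lt_one.trans_le hσ), add_comm, tsub_add_eq_tsub_tsub,
      ENNReal.sub_sub_cancel one_ne_top (ENNReal.inv_le_one.2 hs1)]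
  have hinv : (b / s)⁻¹ = s * b⁻¹ := by
    rw [ENNReal.inv_div (Or.inl ENNReal.ofReal_ne_top) (Or.inl hs0), div_eq_mul_inv]
  have hdist : s * (s⁻¹ - b⁻¹) = 1 - s * b⁻¹ := by
    rw [ENNReal.mul_sub (fun _ _ => ENNReal.ofReal_ne_top),
      ENNReal.mul_inv_cancel hs0 ENNReal.ofReal_ne_top]
  rw [econj, econj, hinv, ← hdist, ← hab',
    ENNReal.mul_inv (Or.inl hs0) (Or.inl ENNReal.ofReal_ne_top), div_eq_mul_inv, mul_comm]

lemma apVarConst_rpow_eq_rpow_apqVarConst {p q : Rn n → ℝ≥0∞} (hp : ∀ x, 1 < p x)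
    (hq : ∀ x, q x ≠ ∞) {σ : ℝ} (hσ : 1 ≤ σ)
    (hexp : ∀ x, (p x)⁻¹ = (q x)⁻¹ + ENNReal.ofReal (1 - 1 / σ)) (w : Rn n → ℝ≥0∞) :
    ApVarConst (fun x => q x / ENNReal.ofReal σ) (fun x => w x ^ σ) =
      ApqVarConst (1 - 1 / σ) p q w ^ σ := by
  have hσ0 : 0 < σ := zero_lt_one.trans_le hσ
  have hconj : (fun x => econj (q x / ENNReal.ofReal σ)) =
      fun x => econj (p x) / ENNReal.ofReal σ :=
    funext fun x => econj_div_ofReal hσ (hexp x)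
  have hvol (B : Set (Rn n)) : (volume B)⁻¹ = (volume B ^ (1 - 1 / σ - 1)) ^ σ := by
    rw [← ENNReal.rpow_mul, show (1 - 1 / σ - 1) * σ = -1 by field_simp; ring,
      ENNReal.rpow_neg_one]
  have hind (B : Set (Rn n)) (g : Rn n → ℝ≥0∞) :
      B.indicator (fun x => g x ^ σ) = fun x => B.indicator g x ^ σ :=
    Set.indicator_comp_of_zero (g := (· ^ σ)) (ENNReal.zero_rpow_of_pos hσ0)
  simp only [ApVarConst, ApqVarConst, hconj, ← ENNReal.inv_rpow, hind, hvol,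
    vnorm_rpow hσ0 hq, vnorm_rpow hσ0 (fun x => econj_ne_top (hp x)),
    ← ENNReal.mul_rpow_of_nonneg _ _ hσ0.le, ENNReal.iSup_rpow hσ0]

theorem apqVar_iff_apVar_general {n : ℕ} (p q : Rn n → ℝ≥0∞)
    (hp : ∀ x, 1 < p x) (hq : ∀ x, q x < ∞)
    (σ : ℝ) (hσ : 1 < σ)
    (hexp : ∀ x, (p x)⁻¹ = (q x)⁻¹ + ENNReal.ofReal (1 - 1 / σ))
    (w : Rn n → ℝ≥0∞) :
    ApqVarConst (1 - 1 / σ) p q w < ∞ ↔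
      ApVarConst (fun x => q x / ENNReal.ofReal σ) (fun x => (w x) ^ σ) < ∞ := by
  rw [apVarConst_rpow_eq_rpow_apqVarConst hp (fun x => (hq x).ne) hσ.le hexp,
    ENNReal.rpow_lt_top_iff_of_pos (zero_lt_one.trans hσ)]

/-- `w ∈ A_{p(·),q(·)}` iff `w^σ ∈ A_{q(·)/σ}` when `1/p(x) - 1/q(x) = 1/σ'`. -/
theorem apqVar_iff_apVar {n : ℕ} (p q : Rn n → ℝ≥0∞)
    (hp : ∀ x, 1 < p x) (hpq : ∀ x, p x ≤ q x) (hq : ∀ x, q x < ∞)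
    (σ : ℝ) (hσ : 1 < σ)
    (hexp : ∀ x, (p x)⁻¹ = (q x)⁻¹ + ENNReal.ofReal (1 - 1 / σ))
    (w : Rn n → ℝ≥0∞) (hwm : Measurable w)
    (hw : ∀ᵐ x ∂(volume : Measure (Rn n)), 0 < w x ∧ w x < ∞) :
    ApqVarConst (1 - 1 / σ) p q w < ∞ ↔
      ApVarConst (fun x => q x / ENNReal.ofReal σ) (fun x => (w x) ^ σ) < ∞ :=
  apqVar_iff_apVar_general p q hp hq σ hσ hexp w

end
end

section
/- (Johnson–Neugebauer) For a weight $w$ and $1 < p, s < \infty$: $w \in A_p \cap RH_s$ if and only if $w^s \in A_\tau$ where $\tau = s(p-1)+1$. -/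
/-!
For a ball `B` write `A = ⨍_B w`, `S = ⨍_B w^s` and `N = ⨍_B w^{1-p'}`. Since
`(w^s)^{1-τ'} = w^{1-p'}`, the `A_τ` ball quantity of `w^s` is `S N^{s(p-1)} = (S^{1/s} N^{p-1})^s`,
and `S^{1/s} N^{p-1} = (S^{1/s} / A) (A N^{p-1})` is the product of the `RH_s` and `A_p` ball
quantities of `w`. Conversely, Jensen's inequality `A ≤ S^{1/s}` bounds the `A_p` quantity by
`S^{1/s} N^{p-1}`, and Hölder's inequality `1 ≤ A N^{p-1}` bounds the `RH_s` quantity by it.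
-/

open MeasureTheory Metric ENNReal

noncomputable section

variable {n : ℕ}

namespace MeasureTheory

variable {α : Type*} [MeasurableSpace α] {μ : Measure α} {f g w : α → ℝ≥0∞}

theorem laverage_mul_le_rpow_mul_rpow {a b : ℝ} (hab : a.HolderConjugate b)
    (hf : AEMeasurable f μ) (hg : AEMeasurable g μ) :
    ⨍⁻ x, f x * g x ∂μ ≤ (⨍⁻ x, f x ^ a ∂μ) ^ (1 / a) * (⨍⁻ x, g x ^ b ∂μ) ^ (1 / b) :=
  ENNReal.lintegral_mul_le_Lp_mul_Lq _ hab (hf.smul_measure _) (hg.smul_measure _)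

theorem laverage_le_rpow_laverage_rpow {q : ℝ} (hq : 1 < q) (hf : AEMeasurable f μ) :
    ⨍⁻ x, f x ∂μ ≤ (⨍⁻ x, f x ^ q ∂μ) ^ (1 / q) := by
  have hq' := Real.HolderConjugate.conjExponent hq
  have hone : (⨍⁻ _x, (1 : ℝ≥0∞) ∂μ) ^ (1 / q.conjExponent) ≤ 1 := by
    refine ENNReal.rpow_le_one ?_ (by have := hq'.symm.pos; positivity)
    rw [laverage_eq, lintegral_one]
    exact ENNReal.div_self_le_one
  have h := laverage_mul_le_rpow_mul_rpow hq' hf (aemeasurable_const (b := (1 : ℝ≥0∞)))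
  simp only [mul_one, ENNReal.one_rpow] at h
  exact h.trans (mul_le_of_le_one_right' hone)

variable [IsFiniteMeasure μ] [NeZero μ]

theorem laverage_ne_zero (hf : AEMeasurable f μ) (hf₀ : ∀ᵐ x ∂μ, f x ≠ 0) :
    ⨍⁻ x, f x ∂μ ≠ 0 := by
  rw [laverage_eq, ENNReal.div_ne_zero, Ne, lintegral_eq_zero_iff' hf]
  refine ⟨fun h => ?_, measure_ne_top _ _⟩
  obtain ⟨x, hx, hx₀⟩ := (h.and hf₀).exists
  exact hx₀ hx

theorem laverage_rpow_ne_zero (e : ℝ) (hw : AEMeasurable w μ)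
    (hw₀ : ∀ᵐ x ∂μ, w x ≠ 0 ∧ w x ≠ ∞) : ⨍⁻ x, w x ^ e ∂μ ≠ 0 :=
  laverage_ne_zero (hw.pow_const e)
    (hw₀.mono fun _ hx => (ENNReal.rpow_pos (pos_iff_ne_zero.2 hx.1) hx.2).ne')

theorem one_le_laverage_mul_laverage_rpow {p : ℝ} (hp : 1 < p) (hw : AEMeasurable w μ)
    (hw₀ : ∀ᵐ x ∂μ, w x ≠ 0 ∧ w x ≠ ∞) :
    1 ≤ (⨍⁻ x, w x ∂μ) * (⨍⁻ x, w x ^ (1 - p / (p - 1)) ∂μ) ^ (p - 1) := by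
  have hp₀ : p ≠ 0 := by positivity
  have hp₁ : p - 1 ≠ 0 := (sub_pos.2 hp).ne'
  have hprod : ⨍⁻ x, w x ^ p⁻¹ * w x ^ (-p⁻¹) ∂μ = 1 := by
    rw [← laverage_one (μ := μ)]
    refine laverage_congr (hw₀.mono fun x hx => ?_)
    change w x ^ p⁻¹ * w x ^ (-p⁻¹) = 1
    rw [← ENNReal.rpow_add _ _ hx.1 hx.2, add_neg_cancel, ENNReal.rpow_zero]
  have h := laverage_mul_le_rpow_mul_rpow (Real.HolderConjugate.conjExponent hp)
    (hw.pow_const p⁻¹) (hw.pow_const (-p⁻¹))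
  have hexp : -p⁻¹ * p.conjExponent = 1 - p / (p - 1) := by
    rw [Real.conjExponent]; field_simp; ring
  simp only [← ENNReal.rpow_mul, inv_mul_cancel₀ hp₀, ENNReal.rpow_one, hexp, hprod] at h
  calc (1 : ℝ≥0∞) = 1 ^ p := (ENNReal.one_rpow p).symm
    _ ≤ _ := ENNReal.rpow_le_rpow h (by positivity)
    _ = _ := by
      rw [ENNReal.mul_rpow_of_nonneg _ _ (by positivity), ← ENNReal.rpow_mul, ← ENNReal.rpow_mul,
        Real.conjExponent, one_div_mul_cancel hp₀, ENNReal.rpow_one]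
      congr 2
      field_simp

end MeasureTheory

namespace ENNReal

theorem iSup_rpow_s11 {ι : Sort*} (f : ι → ℝ≥0∞) {y : ℝ} (hy : 0 < y) :
    (⨆ i, f i) ^ y = ⨆ i, f i ^ y :=
  (orderIsoRpow y hy).map_iSup f

theorem iSup_lt_top_and_iSup_lt_top_iff {ι : Sort*} {a b k : ι → ℝ≥0∞}
    (hak : ∀ i, a i ≤ k i) (hbk : ∀ i, b i ≤ k i) (hkab : ∀ i, a i ≠ ∞ → k i ≤ b i * a i) :
    ((⨆ i, a i) < ∞ ∧ (⨆ i, b i) < ∞) ↔ (⨆ i, k i) < ∞ := by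
  refine ⟨fun ⟨ha, hb⟩ => ?_, fun hk => ⟨(iSup_mono hak).trans_lt hk, (iSup_mono hbk).trans_lt hk⟩⟩
  refine (iSup_le fun i => ?_).trans_lt (mul_lt_top hb ha)
  exact (hkab i (ne_top_of_le_ne_top ha.ne (le_iSup a i))).trans
    (mul_le_mul' (le_iSup b i) (le_iSup a i))

end ENNReal

section Characteristics

variable {α : Type*} [MeasurableSpace α]

def apChar (p : ℝ) (μ : Measure α) (w : α → ℝ≥0∞) : ℝ≥0∞ :=
  (⨍⁻ x, w x ∂μ) * (⨍⁻ x, w x ^ (1 - p / (p - 1)) ∂μ) ^ (p - 1)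

def rhChar (s : ℝ) (μ : Measure α) (w : α → ℝ≥0∞) : ℝ≥0∞ :=
  (⨍⁻ x, w x ^ s ∂μ) ^ (1 / s) / ⨍⁻ x, w x ∂μ

variable {μ : Measure α} {w : α → ℝ≥0∞} {p s : ℝ}

theorem apChar_rpow_rpow_one_div (hp : 1 < p) (hs : 0 < s) :
    apChar (s * (p - 1) + 1) μ (fun x => w x ^ s) ^ (1 / s) =
      (⨍⁻ x, w x ^ s ∂μ) ^ (1 / s) * (⨍⁻ x, w x ^ (1 - p / (p - 1)) ∂μ) ^ (p - 1) := by
  have hp₁ : p - 1 ≠ 0 := (sub_pos.2 hp).ne'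
  have hexp : s * (1 - (s * (p - 1) + 1) / (s * (p - 1))) = 1 - p / (p - 1) := by
    field_simp; ring
  simp only [apChar, add_sub_cancel_right, ← ENNReal.rpow_mul, hexp]
  rw [ENNReal.mul_rpow_of_nonneg _ _ (by positivity), ← ENNReal.rpow_mul]
  congr 2
  field_simp

theorem apChar_le_apChar_rpow_rpow_one_div (hp : 1 < p) (hs : 1 < s) (hw : AEMeasurable w μ) :
    apChar p μ w ≤ apChar (s * (p - 1) + 1) μ (fun x => w x ^ s) ^ (1 / s) := by
  rw [apChar_rpow_rpow_one_div hp (one_pos.trans hs)]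
  exact mul_le_mul_left (laverage_le_rpow_laverage_rpow hs hw) _

variable [IsFiniteMeasure μ] [NeZero μ]

theorem rhChar_le_apChar_rpow_rpow_one_div (hp : 1 < p) (hs : 0 < s) (hw : AEMeasurable w μ)
    (hw₀ : ∀ᵐ x ∂μ, w x ≠ 0 ∧ w x ≠ ∞) :
    rhChar s μ w ≤ apChar (s * (p - 1) + 1) μ (fun x => w x ^ s) ^ (1 / s) := by
  have hA : ⨍⁻ x, w x ∂μ ≠ 0 := laverage_ne_zero hw (hw₀.mono fun _ hx => hx.1)
  have hN : (⨍⁻ x, w x ^ (1 - p / (p - 1)) ∂μ) ^ (p - 1) ≠ 0 :=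
    (ENNReal.rpow_eq_zero_iff_of_pos (sub_pos.2 hp)).not.2 (laverage_rpow_ne_zero _ hw hw₀)
  rw [apChar_rpow_rpow_one_div hp hs, rhChar, div_eq_mul_inv]
  exact mul_le_mul_right ((ENNReal.inv_le_iff_le_mul (fun _ => hA) (fun _ => hN)).2
    (one_le_laverage_mul_laverage_rpow hp hw hw₀)) _

theorem apChar_rpow_rpow_one_div_eq_rhChar_mul_apChar (hp : 1 < p) (hs : 0 < s)
    (hw : AEMeasurable w μ) (hw₀ : ∀ᵐ x ∂μ, w x ≠ 0 ∧ w x ≠ ∞) (hap : apChar p μ w ≠ ∞) :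
    apChar (s * (p - 1) + 1) μ (fun x => w x ^ s) ^ (1 / s) = rhChar s μ w * apChar p μ w := by
  have hN : (⨍⁻ x, w x ^ (1 - p / (p - 1)) ∂μ) ^ (p - 1) ≠ 0 :=
    (ENNReal.rpow_eq_zero_iff_of_pos (sub_pos.2 hp)).not.2 (laverage_rpow_ne_zero _ hw hw₀)
  have hA_top : ⨍⁻ x, w x ∂μ ≠ ∞ := fun h => hap (by rw [apChar, h, ENNReal.top_mul hN])
  rw [apChar_rpow_rpow_one_div hp hs, rhChar, apChar, ← mul_assoc,
    ENNReal.div_mul_cancel (laverage_ne_zero hw (hw₀.mono fun _ hx => hx.1)) hA_top]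

end Characteristics

instance (b : Rn n × Set.Ioi (0 : ℝ)) : IsFiniteMeasure (volume.restrict (ball b.1 (b.2 : ℝ))) :=
  isFiniteMeasure_restrict.2 measure_ball_lt_top.ne

instance (b : Rn n × Set.Ioi (0 : ℝ)) : NeZero (volume.restrict (ball b.1 (b.2 : ℝ))) :=
  ⟨by simpa using (measure_ball_pos volume b.1 b.2.2).ne'⟩

theorem iSup_pos_eq_iSup_prod_Ioi {X β : Type*} [CompleteLattice β] (f : X → ℝ → β) :
    ⨆ (c : X) (r : ℝ) (_ : 0 < r), f c r = ⨆ b : X × Set.Ioi (0 : ℝ), f b.1 b.2 := by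
  simp only [iSup_prod, iSup_subtype, Set.mem_Ioi]

theorem apConst_eq_iSup_apChar (p : ℝ) (w : Rn n → ℝ≥0∞) :
    ApConst p w = ⨆ b : Rn n × Set.Ioi (0 : ℝ), apChar p (volume.restrict (ball b.1 b.2)) w := by
  simp only [ApConst, apChar, setLAverage_eq, ENNReal.div_eq_inv_mul, iSup_pos_eq_iSup_prod_Ioi]

theorem rhConst_eq_iSup_rhChar (s : ℝ) (w : Rn n → ℝ≥0∞) :
    RHConst s w = ⨆ b : Rn n × Set.Ioi (0 : ℝ), rhChar s (volume.restrict (ball b.1 b.2)) w := by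
  simp only [RHConst, rhChar, setLAverage_eq, ENNReal.div_eq_inv_mul, iSup_pos_eq_iSup_prod_Ioi]

/-- (Johnson–Neugebauer) `w ∈ A_p ∩ RH_s` iff `w^s ∈ A_τ` with `τ = s(p-1)+1`. -/
theorem johnson_neugebauer {n : ℕ} (p s : ℝ) (hp : 1 < p) (hs : 1 < s)
    (w : Rn n → ℝ≥0∞) (hwm : Measurable w)
    (hw : ∀ᵐ x ∂(volume : Measure (Rn n)), 0 < w x ∧ w x < ∞) :
    (ApConst p w < ∞ ∧ RHConst s w < ∞) ↔
      ApConst (s * (p - 1) + 1) (fun x => (w x) ^ s) < ∞ := by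
  have hs₀ : 0 < s := one_pos.trans hs
  have hw₀ : ∀ᵐ x ∂volume, w x ≠ 0 ∧ w x ≠ ∞ := hw.mono fun _ hx => ⟨hx.1.ne', hx.2.ne⟩
  conv_rhs => rw [← ENNReal.rpow_lt_top_iff_of_pos (one_div_pos.2 hs₀), apConst_eq_iSup_apChar,
    ENNReal.iSup_rpow_s11 _ (one_div_pos.2 hs₀)]
  rw [apConst_eq_iSup_apChar, rhConst_eq_iSup_rhChar]
  refine ENNReal.iSup_lt_top_and_iSup_lt_top_iff (fun b => ?_) (fun b => ?_) (fun b hb => ?_)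
  · exact apChar_le_apChar_rpow_rpow_one_div hp hs hwm.aemeasurable
  · exact rhChar_le_apChar_rpow_rpow_one_div hp hs₀ hwm.aemeasurable (ae_restrict_of_ae hw₀)
  · exact (apChar_rpow_rpow_one_div_eq_rhChar_mul_apChar hp hs₀ hwm.aemeasurable
      (ae_restrict_of_ae hw₀) hb).le
end
end
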